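/- arXiv:2211.00163 — 7 statements merged into one kernel-verified Lean document; each statement's English description precedes it below -/
import Mathlib

section
/- Given any μ0, μ1 ∈ ℝ and σ0, σ1 > 0, the random vector (Y0, Y1) that is uniformly distributed on the two-point set {(μ0-σ0, μ1-σ1), (μ0+σ0, μ1+σ1)} satisfies E(Y0)=μ0, E(Y1)=μ1, var(Y0)=σ0², var(Y1)=σ1², and var(Y1-Y0) = (σ1-σ0)². -/
open MeasureTheory ProbabilityTheory

lemma mem2_aux (f : Bool → ℝ) (m : Measure Bool) [IsFiniteMeasure m] : MemLp f 2 m := by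
  apply MemLp.mono_exponent (q := ⊤) _ le_top
  exact memLp_top_of_bound (by measurability) (max ‖f false‖ ‖f true‖)
    (Filter.Eventually.of_forall (by rintro (_|_) <;> simp))

lemma integral_unif (f : Bool → ℝ) :
    (∫ ω, f ω ∂(PMF.uniformOfFintype Bool).toMeasure) = (f false + f true) / 2 := by
  rw [PMF.integral_eq_sum]
  simp [PMF.uniformOfFintype_apply]
  ring

lemma var_unif (f : Bool → ℝ) :
    variance f (PMF.uniformOfFintype Bool).toMeasure = ((f true - f false) / 2) ^ 2 := by
  rw [show variance f (PMF.uniformOfFintype Bool).toMeasure = ∫ ω, ((f - fun _ => (PMF.uniformOfFintype Bool).toMeasure[f]) ^ (2 : ℕ) : Bool → ℝ) ω ∂(PMF.uniformOfFintype Bool).toMeasure from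
    variance_eq_integral (mem2_aux f _).1.aemeasurable]
  rw [show ((f - fun _ => (PMF.uniformOfFintype Bool).toMeasure[f]) ^ (2 : ℕ)) =
    fun ω => (f ω - (∫ ω, f ω ∂(PMF.uniformOfFintype Bool).toMeasure)) ^ 2 from rfl]
  rw [integral_unif, integral_unif]
  ring

theorem lower_bound_attained (μ0 μ1 σ0 σ1 : ℝ) (hσ0 : 0 < σ0) (hσ1 : 0 < σ1) :
    ∀ (m : Measure Bool), m = (PMF.uniformOfFintype Bool).toMeasure →
    ∀ (Y0 Y1 : Bool → ℝ),
      Y0 = (fun b => if b then μ0 + σ0 else μ0 - σ0) →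
      Y1 = (fun b => if b then μ1 + σ1 else μ1 - σ1) →
      (∫ ω, Y0 ω ∂m) = μ0 ∧ (∫ ω, Y1 ω ∂m) = μ1 ∧
        variance Y0 m = σ0 ^ 2 ∧ variance Y1 m = σ1 ^ 2 ∧
        variance (Y1 - Y0) m = (σ1 - σ0) ^ 2 := by
  rintro m rfl Y0 Y1 rfl rfl
  refine ⟨?_, ?_, ?_, ?_, ?_⟩ <;>
    simp only [integral_unif, var_unif, Pi.sub_apply] <;> norm_num <;> ring
end

section
/- Given any μ0, μ1 ∈ ℝ and σ0, σ1 > 0, the random vector (Y0, Y1) uniformly distributed on {(μ0-σ0, μ1+σ1), (μ0+σ0, μ1-σ1)} satisfies E(Y0)=μ0, E(Y1)=μ1, var(Y0)=σ0², var(Y1)=σ1², and var(Y1-Y0) = (σ1+σ0)². -/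
open MeasureTheory ProbabilityTheory

theorem upper_bound_attained (μ0 μ1 σ0 σ1 : ℝ) (hσ0 : 0 < σ0) (hσ1 : 0 < σ1) :
    ∀ (m : Measure Bool), m = (PMF.uniformOfFintype Bool).toMeasure →
    ∀ (Y0 Y1 : Bool → ℝ),
      Y0 = (fun b => if b then μ0 + σ0 else μ0 - σ0) →
      Y1 = (fun b => if b then μ1 - σ1 else μ1 + σ1) →
      (∫ ω, Y0 ω ∂m) = μ0 ∧ (∫ ω, Y1 ω ∂m) = μ1 ∧
        variance Y0 m = σ0 ^ 2 ∧ variance Y1 m = σ1 ^ 2 ∧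
        variance (Y1 - Y0) m = (σ1 + σ0) ^ 2 := by
  rintro m rfl Y0 Y1 rfl rfl
  have hint : ∀ f : Bool → ℝ,
      ∫ ω, f ω ∂(PMF.uniformOfFintype Bool).toMeasure = (f true + f false) / 2 := by
    intro f
    rw [PMF.integral_eq_sum]
    simp [PMF.uniformOfFintype_apply, Fintype.sum_bool, ENNReal.toReal_inv]
    ring
  have hvar : ∀ f : Bool → ℝ,
      variance f (PMF.uniformOfFintype Bool).toMeasure =
        ((f true - (f true + f false) / 2) ^ 2 + (f false - (f true + f false) / 2) ^ 2) / 2 := by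
    intro f
    rw [variance_eq_integral (measurable_of_countable f).aemeasurable]
    simp only [hint, Pi.sub_apply, Pi.pow_apply]
  refine ⟨?_, ?_, ?_, ?_, ?_⟩
  · rw [hint]; norm_num
  · rw [hint]; norm_num
  · rw [hvar]; norm_num
  · rw [hvar]; norm_num
  · rw [hvar]; norm_num; ring
end

section
/- If Y0 and Y1 are random variables taking values in [m, M] almost surely, then cov(Y1, Y0) ≥ -min{(E(Y0)-m)(E(Y1)-m), (M-E(Y0))(M-E(Y1))}. -/
open MeasureTheory ProbabilityTheory

theorem cov_lower_bound {Ω : Type*} [MeasureSpace Ω] [IsProbabilityMeasure (ℙ : Measure Ω)]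
    (m M : ℝ) (hmM : m < M) (Y0 Y1 : Ω → ℝ) (hm0 : Measurable Y0) (hm1 : Measurable Y1)
    (hb0 : ∀ᵐ ω ∂ℙ, Y0 ω ∈ Set.Icc m M) (hb1 : ∀ᵐ ω ∂ℙ, Y1 ω ∈ Set.Icc m M) :
    -(min (((∫ ω, Y0 ω ∂ℙ) - m) * ((∫ ω, Y1 ω ∂ℙ) - m))
        ((M - ∫ ω, Y0 ω ∂ℙ) * (M - ∫ ω, Y1 ω ∂ℙ)))
      ≤ ∫ ω, (Y1 ω - ∫ ω', Y1 ω' ∂ℙ) * (Y0 ω - ∫ ω', Y0 ω' ∂ℙ) ∂ℙ := by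
  set C : ℝ := max |m| |M| with hC
  have hbd : ∀ x : ℝ, x ∈ Set.Icc m M → ‖x‖ ≤ C := by
    intro x hx
    rw [Real.norm_eq_abs, abs_le]
    constructor
    · have : -C ≤ m := by
        have := neg_abs_le m
        have h2 : -C ≤ -|m| := neg_le_neg (le_max_left _ _)
        linarith
      linarith [hx.1]
    · have : M ≤ C := le_trans (le_abs_self M) (le_max_right _ _)
      linarith [hx.2]
  have hi0 : Integrable Y0 ℙ := by
    refine Integrable.mono' (integrable_const C) hm0.aestronglyMeasurable ?_
    filter_upwards [hb0] with ω hω using hbd _ hω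
  have hi1 : Integrable Y1 ℙ := by
    refine Integrable.mono' (integrable_const C) hm1.aestronglyMeasurable ?_
    filter_upwards [hb1] with ω hω using hbd _ hω
  have hi01 : Integrable (fun ω => Y1 ω * Y0 ω) ℙ := by
    refine Integrable.mono' (integrable_const (C * C)) (hm1.mul hm0).aestronglyMeasurable ?_
    filter_upwards [hb0, hb1] with ω h0 h1
    rw [norm_mul]
    have hC0 : (0:ℝ) ≤ C := le_trans (abs_nonneg m) (le_max_left _ _)
    exact mul_le_mul (hbd _ h1) (hbd _ h0) (norm_nonneg _) hC0
  set μ0 : ℝ := ∫ ω, Y0 ω ∂ℙ with hμ0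
  set μ1 : ℝ := ∫ ω, Y1 ω ∂ℙ with hμ1
  have key : ∀ a b : ℝ, ∫ ω, (Y1 ω - a) * (Y0 ω - b) ∂ℙ
      = (∫ ω, Y1 ω * Y0 ω ∂ℙ) - a * μ0 - b * μ1 + a * b := by
    intro a b
    have heq : (fun ω => (Y1 ω - a) * (Y0 ω - b))
        = fun ω => (Y1 ω * Y0 ω - a * Y0 ω - b * Y1 ω) + a * b := by
      funext ω; ring
    have hA : Integrable (fun ω => Y1 ω * Y0 ω - a * Y0 ω) ℙ := hi01.sub (hi0.const_mul a)
    have hB : Integrable (fun ω => Y1 ω * Y0 ω - a * Y0 ω - b * Y1 ω) ℙ := hA.sub (hi1.const_mul b)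
    rw [heq, integral_add hB (integrable_const _),
      integral_sub hA (hi1.const_mul b),
      integral_sub hi01 (hi0.const_mul a), integral_const_mul, integral_const_mul, integral_const]
    simp [measure_univ, hμ0, hμ1]
  have h1 : (0:ℝ) ≤ ∫ ω, (Y1 ω - m) * (Y0 ω - m) ∂ℙ := by
    refine integral_nonneg_of_ae ?_
    filter_upwards [hb0, hb1] with ω h0 hh1
    exact mul_nonneg (by linarith [hh1.1]) (by linarith [h0.1])
  have h2 : (0:ℝ) ≤ ∫ ω, (Y1 ω - M) * (Y0 ω - M) ∂ℙ := by
    refine integral_nonneg_of_ae ?_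
    filter_upwards [hb0, hb1] with ω h0 hh1
    have : (Y1 ω - M) * (Y0 ω - M) = (M - Y1 ω) * (M - Y0 ω) := by ring
    rw [this]
    exact mul_nonneg (by linarith [hh1.2]) (by linarith [h0.2])
  have k1 := key m m
  have k2 := key M M
  have kc := key μ1 μ0
  rw [kc]
  rw [k1] at h1
  rw [k2] at h2
  rw [neg_le]
  apply le_min <;> nlinarith [h1, h2]
end

section
/- If Y0 and Y1 are random variables taking values in [m, M] almost surely, then cov(Y1, Y0) ≤ min{(M-E(Y0))(E(Y1)-m), (E(Y0)-m)(M-E(Y1))}. -/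
open MeasureTheory ProbabilityTheory

lemma cov_aux {Ω : Type*} [MeasureSpace Ω] [IsProbabilityMeasure (ℙ : Measure Ω)]
    (m M : ℝ) (X Y : Ω → ℝ) (hmX : Measurable X) (hmY : Measurable Y)
    (hbX : ∀ᵐ ω ∂ℙ, X ω ∈ Set.Icc m M) (hbY : ∀ᵐ ω ∂ℙ, Y ω ∈ Set.Icc m M) :
    (∫ ω, (X ω - ∫ ω', X ω' ∂ℙ) * (Y ω - ∫ ω', Y ω' ∂ℙ) ∂ℙ)
      ≤ (M - ∫ ω, Y ω ∂ℙ) * ((∫ ω, X ω ∂ℙ) - m) := by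
  have hiX : Integrable X ℙ := by
    refine Integrable.mono' (integrable_const (max |m| |M|)) hmX.aestronglyMeasurable ?_
    filter_upwards [hbX] with ω h
    exact abs_le_max_abs_abs h.1 h.2
  have hiY : Integrable Y ℙ := by
    refine Integrable.mono' (integrable_const (max |m| |M|)) hmY.aestronglyMeasurable ?_
    filter_upwards [hbY] with ω h
    exact abs_le_max_abs_abs h.1 h.2
  set μX := ∫ ω, X ω ∂ℙ with hμXdef
  set μY := ∫ ω, Y ω ∂ℙ with hμYdef
  have hμXm : m ≤ μX := by
    have := integral_mono_ae (integrable_const m) hiX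
      (by filter_upwards [hbX] with ω h using h.1)
    simpa using this
  have hμXM : μX ≤ M := by
    have := integral_mono_ae hiX (integrable_const M)
      (by filter_upwards [hbX] with ω h using h.2)
    simpa using this
  have hμYm : m ≤ μY := by
    have := integral_mono_ae (integrable_const m) hiY
      (by filter_upwards [hbY] with ω h using h.1)
    simpa using this
  have hμYM : μY ≤ M := by
    have := integral_mono_ae hiY (integrable_const M)
      (by filter_upwards [hbY] with ω h using h.2)
    simpa using this
  have hiP : Integrable (fun ω => (M - Y ω) * (X ω - m)) ℙ := by
    refine Integrable.mono' (integrable_const ((M - m) * (M - m)))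
      ((measurable_const.sub hmY).mul (hmX.sub measurable_const)).aestronglyMeasurable ?_
    filter_upwards [hbX, hbY] with ω hX hY
    rw [Real.norm_eq_abs, abs_mul]
    have h1 : |M - Y ω| ≤ M - m := abs_le.2 ⟨by linarith [hY.1, hY.2], by linarith [hY.1]⟩
    have h2 : |X ω - m| ≤ M - m := abs_le.2 ⟨by linarith [hX.1, hX.2], by linarith [hX.2]⟩
    exact mul_le_mul h1 h2 (abs_nonneg _) (by linarith [hY.1, hY.2])
  have hiC : Integrable (fun ω => (X ω - μX) * (Y ω - μY)) ℙ := by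
    refine Integrable.mono' (integrable_const ((M - m) * (M - m)))
      ((hmX.sub measurable_const).mul (hmY.sub measurable_const)).aestronglyMeasurable ?_
    filter_upwards [hbX, hbY] with ω hX hY
    rw [Real.norm_eq_abs, abs_mul]
    have h1 : |X ω - μX| ≤ M - m := abs_le.2 ⟨by linarith [hX.1], by linarith [hX.2]⟩
    have h2 : |Y ω - μY| ≤ M - m := abs_le.2 ⟨by linarith [hY.1], by linarith [hY.2]⟩
    exact mul_le_mul h1 h2 (abs_nonneg _) (by linarith [hX.1, hX.2])
  have hnn : 0 ≤ ∫ ω, (M - Y ω) * (X ω - m) ∂ℙ := by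
    refine integral_nonneg_of_ae ?_
    filter_upwards [hbX, hbY] with ω hX hY
    exact mul_nonneg (by linarith [hY.2]) (by linarith [hX.1])
  have key : (∫ ω, (X ω - μX) * (Y ω - μY) ∂ℙ) + (∫ ω, (M - Y ω) * (X ω - m) ∂ℙ)
      = (M - μY) * (μX - m) := by
    rw [← integral_add hiC hiP]
    have heq : ∀ ω, (X ω - μX) * (Y ω - μY) + (M - Y ω) * (X ω - m)
        = (M - μY) * X ω + ((m - μX) * Y ω + (μX * μY - M * m)) := by
      intro ω; ring
    simp_rw [heq]
    have hg : Integrable (fun ω => (m - μX) * Y ω + (μX * μY - M * m)) ℙ :=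
      (hiY.const_mul _).add (integrable_const _)
    rw [integral_add (hiX.const_mul _) hg,
      integral_add (hiY.const_mul _) (integrable_const _),
      integral_const_mul, integral_const_mul, integral_const]
    simp only [measure_univ, probReal_univ, ENNReal.toReal_one, smul_eq_mul, one_mul]
    ring
  linarith

theorem cov_upper_bound {Ω : Type*} [MeasureSpace Ω] [IsProbabilityMeasure (ℙ : Measure Ω)]
    (m M : ℝ) (hmM : m < M) (Y0 Y1 : Ω → ℝ) (hm0 : Measurable Y0) (hm1 : Measurable Y1)
    (hb0 : ∀ᵐ ω ∂ℙ, Y0 ω ∈ Set.Icc m M) (hb1 : ∀ᵐ ω ∂ℙ, Y1 ω ∈ Set.Icc m M) :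
    (∫ ω, (Y1 ω - ∫ ω', Y1 ω' ∂ℙ) * (Y0 ω - ∫ ω', Y0 ω' ∂ℙ) ∂ℙ)
      ≤ min ((M - ∫ ω, Y0 ω ∂ℙ) * ((∫ ω, Y1 ω ∂ℙ) - m))
          (((∫ ω, Y0 ω ∂ℙ) - m) * (M - ∫ ω, Y1 ω ∂ℙ)) := by
  refine le_min ?_ ?_
  · exact cov_aux m M Y1 Y0 hm1 hm0 hb1 hb0
  · have h := cov_aux m M Y0 Y1 hm0 hm1 hb0 hb1
    have e : (∫ ω, (Y1 ω - ∫ ω', Y1 ω' ∂ℙ) * (Y0 ω - ∫ ω', Y0 ω' ∂ℙ) ∂ℙ)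
        = ∫ ω, (Y0 ω - ∫ ω', Y0 ω' ∂ℙ) * (Y1 ω - ∫ ω', Y1 ω' ∂ℙ) ∂ℙ :=
      integral_congr_ae (Filter.Eventually.of_forall fun ω => mul_comm _ _)
    rw [e]
    linarith
end

section
/- For random variables Y0, Y1 bounded in [m, M], defining s⁻ = 2·min{sqrt(var(Y0)var(Y1)), (M-E(Y0))(E(Y1)-m), (E(Y0)-m)(M-E(Y1))} and s⁺ = 2·min{sqrt(var(Y0)var(Y1)), (E(Y0)-m)(E(Y1)-m), (M-E(Y0))(M-E(Y1))}, it holds that var(Y0)+var(Y1)-s⁻ ≤ var(Y1-Y0) ≤ var(Y0)+var(Y1)+s⁺. -/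
open MeasureTheory ProbabilityTheory

section Aux

variable {Ω : Type*} [MeasureSpace Ω] {μ : Measure Ω}

lemma integrable_mul_of_sq (f g : Ω → ℝ) (hfm : AEStronglyMeasurable f μ)
    (hgm : AEStronglyMeasurable g μ)
    (hf2 : Integrable (fun ω => f ω ^ 2) μ) (hg2 : Integrable (fun ω => g ω ^ 2) μ) :
    Integrable (fun ω => f ω * g ω) μ := by
  refine (hf2.add hg2).mono' (hfm.mul hgm) (ae_of_all _ fun ω => ?_)
  have h := sq_nonneg (|f ω| - |g ω|)
  have h2 : ‖f ω * g ω‖ = |f ω| * |g ω| := by rw [Real.norm_eq_abs, abs_mul]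
  simp only [Pi.add_apply, h2]
  nlinarith [sq_abs (f ω), sq_abs (g ω)]

lemma sq_integral_mul_le (f g : Ω → ℝ) (hfm : AEStronglyMeasurable f μ)
    (hgm : AEStronglyMeasurable g μ)
    (hf2 : Integrable (fun ω => f ω ^ 2) μ) (hg2 : Integrable (fun ω => g ω ^ 2) μ) :
    (∫ ω, f ω * g ω ∂μ) ^ 2 ≤ (∫ ω, f ω ^ 2 ∂μ) * ∫ ω, g ω ^ 2 ∂μ := by
  have hfg : Integrable (fun ω => f ω * g ω) μ := integrable_mul_of_sq f g hfm hgm hf2 hg2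
  have key : ∀ t : ℝ, 0 ≤ (∫ ω, g ω ^ 2 ∂μ) * (t * t) + (2 * ∫ ω, f ω * g ω ∂μ) * t
      + ∫ ω, f ω ^ 2 ∂μ := by
    intro t
    have h0 : 0 ≤ ∫ ω, (f ω + t * g ω) ^ 2 ∂μ := integral_nonneg fun ω => sq_nonneg _
    have hA : Integrable (fun ω => 2 * t * (f ω * g ω)) μ := hfg.const_mul _
    have hB : Integrable (fun ω => t ^ 2 * g ω ^ 2) μ := hg2.const_mul _
    have hexp : ∫ ω, (f ω + t * g ω) ^ 2 ∂μ
        = (∫ ω, f ω ^ 2 ∂μ) + ((2 * t) * ∫ ω, f ω * g ω ∂μ + t ^ 2 * ∫ ω, g ω ^ 2 ∂μ) := by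
      have h1 : ∫ ω, (f ω + t * g ω) ^ 2 ∂μ
          = ∫ ω, f ω ^ 2 + (2 * t * (f ω * g ω) + t ^ 2 * g ω ^ 2) ∂μ :=
        integral_congr_ae (ae_of_all _ fun ω => by ring)
      have hAB : Integrable (fun ω => 2 * t * (f ω * g ω) + t ^ 2 * g ω ^ 2) μ := hA.add hB
      rw [h1, integral_add hf2 hAB, integral_add hA hB, integral_const_mul,
        integral_const_mul]
    nlinarith [h0, hexp]
  have hd := discrim_le_zero key
  rw [discrim] at hd
  nlinarith [hd]

end Aux

theorem teh_bound_bounded {Ω : Type*} [MeasureSpace Ω] [IsProbabilityMeasure (ℙ : Measure Ω)]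
    (m M : ℝ) (hmM : m < M) (Y0 Y1 : Ω → ℝ) (hm0 : Measurable Y0) (hm1 : Measurable Y1)
    (hb0 : ∀ᵐ ω ∂ℙ, Y0 ω ∈ Set.Icc m M) (hb1 : ∀ᵐ ω ∂ℙ, Y1 ω ∈ Set.Icc m M) :
    variance Y0 ℙ + variance Y1 ℙ -
        2 * min (Real.sqrt (variance Y0 ℙ * variance Y1 ℙ))
            (min ((M - ∫ ω, Y0 ω ∂ℙ) * ((∫ ω, Y1 ω ∂ℙ) - m))
              (((∫ ω, Y0 ω ∂ℙ) - m) * (M - ∫ ω, Y1 ω ∂ℙ)))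
        ≤ variance (Y1 - Y0) ℙ ∧
      variance (Y1 - Y0) ℙ
        ≤ variance Y0 ℙ + variance Y1 ℙ +
            2 * min (Real.sqrt (variance Y0 ℙ * variance Y1 ℙ))
              (min (((∫ ω, Y0 ω ∂ℙ) - m) * ((∫ ω, Y1 ω ∂ℙ) - m))
                ((M - ∫ ω, Y0 ω ∂ℙ) * (M - ∫ ω, Y1 ω ∂ℙ))) := by
  set μ0 := ∫ ω, Y0 ω ∂ℙ with hμ0
  set μ1 := ∫ ω, Y1 ω ∂ℙ with hμ1
  have hL0 : MemLp Y0 2 ℙ := memLp_of_bounded hb0 hm0.aestronglyMeasurable 2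
  have hL1 : MemLp Y1 2 ℙ := memLp_of_bounded hb1 hm1.aestronglyMeasurable 2
  set f : Ω → ℝ := fun ω => Y0 ω - μ0 with hfdef
  set g : Ω → ℝ := fun ω => Y1 ω - μ1 with hgdef
  have hLf : MemLp f 2 ℙ := hL0.sub (memLp_const μ0)
  have hLg : MemLp g 2 ℙ := hL1.sub (memLp_const μ1)
  have hf2 : Integrable (fun ω => f ω ^ 2) ℙ := hLf.integrable_sq
  have hg2 : Integrable (fun ω => g ω ^ 2) ℙ := hLg.integrable_sq
  have hfm : AEStronglyMeasurable f ℙ := hLf.aestronglyMeasurable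
  have hgm : AEStronglyMeasurable g ℙ := hLg.aestronglyMeasurable
  have hfg : Integrable (fun ω => f ω * g ω) ℙ := integrable_mul_of_sq f g hfm hgm hf2 hg2
  have hi0 : Integrable Y0 ℙ := hL0.integrable one_le_two
  have hi1 : Integrable Y1 ℙ := hL1.integrable one_le_two
  have hif : Integrable f ℙ := hi0.sub (integrable_const μ0)
  have hig : Integrable g ℙ := hi1.sub (integrable_const μ1)
  have hintf : ∫ ω, f ω ∂ℙ = 0 := by
    simp only [hfdef]; rw [integral_sub hi0 (integrable_const μ0)]; simp [hμ0]
  have hintg : ∫ ω, g ω ∂ℙ = 0 := by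
    simp only [hgdef]; rw [integral_sub hi1 (integrable_const μ1)]; simp [hμ1]
  -- variances as integrals
  have hV0 : variance Y0 ℙ = ∫ ω, f ω ^ 2 ∂ℙ := by
    rw [variance_eq_integral hm0.aemeasurable]
  have hV1 : variance Y1 ℙ = ∫ ω, g ω ^ 2 ∂ℙ := by
    rw [variance_eq_integral hm1.aemeasurable]
  set C := ∫ ω, f ω * g ω ∂ℙ with hC
  -- variance of the difference
  have hidiff : ∫ ω, (Y1 - Y0) ω ∂ℙ = μ1 - μ0 := by
    simp only [Pi.sub_apply]
    rw [integral_sub hi1 hi0]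
  have hVdiff : variance (Y1 - Y0) ℙ
      = (∫ ω, f ω ^ 2 ∂ℙ) + (∫ ω, g ω ^ 2 ∂ℙ) - 2 * C := by
    rw [variance_eq_integral (hm1.sub hm0).aemeasurable, hidiff]
    have hD : Integrable (fun ω => f ω ^ 2 - 2 * (f ω * g ω)) ℙ := hf2.sub (hfg.const_mul 2)
    have heq : ∫ ω, (((Y1 - Y0) - fun _ => μ1 - μ0 : Ω → ℝ) ^ 2) ω ∂ℙ
        = ∫ ω, g ω ^ 2 + (f ω ^ 2 - 2 * (f ω * g ω)) ∂ℙ := by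
      refine integral_congr_ae (ae_of_all _ fun ω => ?_)
      simp only [Pi.pow_apply, Pi.sub_apply, hfdef, hgdef]
      ring
    rw [(show ∫ ω, ((Y1 - Y0) ω - (μ1 - μ0)) ^ 2 ∂ℙ = ∫ ω, g ω ^ 2 + (f ω ^ 2 - 2 * (f ω * g ω)) ∂ℙ from heq), integral_add hg2 hD, integral_sub hf2 (hfg.const_mul 2), integral_const_mul]
    ring
  -- Cauchy-Schwarz
  have hCS : |C| ≤ Real.sqrt (variance Y0 ℙ * variance Y1 ℙ) := by
    rw [hV0, hV1, ← Real.sqrt_sq_eq_abs]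
    exact Real.sqrt_le_sqrt (sq_integral_mul_le f g hfm hgm hf2 hg2)
  -- mean bounds
  have hμ0m : m ≤ μ0 := by
    rw [hμ0]
    calc m = ∫ _, m ∂ℙ := by simp
      _ ≤ _ := integral_mono_ae (integrable_const m) hi0
            (by filter_upwards [hb0] with ω h using h.1)
  have hμ0M : μ0 ≤ M := by
    rw [hμ0]
    calc _ ≤ ∫ _, M ∂ℙ := integral_mono_ae hi0 (integrable_const M)
            (by filter_upwards [hb0] with ω h using h.2)
      _ = M := by simp
  have hμ1m : m ≤ μ1 := by
    rw [hμ1]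
    calc m = ∫ _, m ∂ℙ := by simp
      _ ≤ _ := integral_mono_ae (integrable_const m) hi1
            (by filter_upwards [hb1] with ω h using h.1)
  have hμ1M : μ1 ≤ M := by
    rw [hμ1]
    calc _ ≤ ∫ _, M ∂ℙ := integral_mono_ae hi1 (integrable_const M)
            (by filter_upwards [hb1] with ω h using h.2)
      _ = M := by simp
  -- rewrite C as ∫ f * (Y1 - m) and ∫ f * (Y1 - M)
  have him : Integrable (fun ω => f ω * (Y1 ω - m)) ℙ := by
    have : (fun ω => f ω * (Y1 ω - m)) = fun ω => f ω * g ω + f ω * (μ1 - m) := by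
      funext ω; simp only [hgdef]; ring
    rw [this]; exact hfg.add (hif.mul_const _)
  have hiM : Integrable (fun ω => f ω * (Y1 ω - M)) ℙ := by
    have : (fun ω => f ω * (Y1 ω - M)) = fun ω => f ω * g ω + f ω * (μ1 - M) := by
      funext ω; simp only [hgdef]; ring
    rw [this]; exact hfg.add (hif.mul_const _)
  have hCm : C = ∫ ω, f ω * (Y1 ω - m) ∂ℙ := by
    have : ∫ ω, f ω * (Y1 ω - m) ∂ℙ = ∫ ω, f ω * g ω + f ω * (μ1 - m) ∂ℙ := by
      refine integral_congr_ae (ae_of_all _ fun ω => ?_)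
      simp only [hgdef]; ring
    rw [this, integral_add hfg (hif.mul_const _), integral_mul_const, hintf, hC]
    ring
  have hCM : C = ∫ ω, f ω * (Y1 ω - M) ∂ℙ := by
    have : ∫ ω, f ω * (Y1 ω - M) ∂ℙ = ∫ ω, f ω * g ω + f ω * (μ1 - M) ∂ℙ := by
      refine integral_congr_ae (ae_of_all _ fun ω => ?_)
      simp only [hgdef]; ring
    rw [this, integral_add hfg (hif.mul_const _), integral_mul_const, hintf, hC]
    ring
  have hiconst1 : Integrable (fun ω => (M - μ0) * (Y1 ω - m)) ℙ :=
    ((hi1.sub (integrable_const m)).const_mul _)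
  have hint1 : ∫ ω, (M - μ0) * (Y1 ω - m) ∂ℙ = (M - μ0) * (μ1 - m) := by
    rw [integral_const_mul, integral_sub hi1 (integrable_const m)]
    simp [hμ1]
  -- covariance upper bounds
  have hC_le1 : C ≤ (M - μ0) * (μ1 - m) := by
    rw [hCm, ← hint1]
    refine integral_mono_ae him hiconst1 ?_
    filter_upwards [hb0, hb1] with ω h0 h1
    have hfle : f ω ≤ M - μ0 := by simp only [hfdef]; linarith [h0.2]
    have hg0 : 0 ≤ Y1 ω - m := by linarith [h1.1]
    exact mul_le_mul_of_nonneg_right hfle hg0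
  have hC_le2 : C ≤ (μ0 - m) * (M - μ1) := by
    rw [hCM]
    have hint2 : ∫ ω, (m - μ0) * (Y1 ω - M) ∂ℙ = (μ0 - m) * (M - μ1) := by
      rw [integral_const_mul, integral_sub hi1 (integrable_const M)]
      simp only [integral_const, probReal_univ, smul_eq_mul, one_mul, ← hμ1]
      ring
    rw [← hint2]
    refine integral_mono_ae hiM ((hi1.sub (integrable_const M)).const_mul _) ?_
    filter_upwards [hb0, hb1] with ω h0 h1
    have hfge : m - μ0 ≤ f ω := by simp only [hfdef]; linarith [h0.1]
    have hg0 : Y1 ω - M ≤ 0 := by linarith [h1.2]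
    nlinarith
  -- covariance lower bounds
  have hC_ge1 : -((μ0 - m) * (μ1 - m)) ≤ C := by
    rw [hCm]
    have hint3 : ∫ ω, (m - μ0) * (Y1 ω - m) ∂ℙ = (m - μ0) * (μ1 - m) := by
      rw [integral_const_mul, integral_sub hi1 (integrable_const m)]
      simp only [integral_const, probReal_univ, smul_eq_mul, one_mul, ← hμ1]
    have : (m - μ0) * (μ1 - m) = -((μ0 - m) * (μ1 - m)) := by ring
    rw [← this, ← hint3]
    refine integral_mono_ae ((hi1.sub (integrable_const m)).const_mul _) him ?_
    filter_upwards [hb0, hb1] with ω h0 h1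
    have hfge : m - μ0 ≤ f ω := by simp only [hfdef]; linarith [h0.1]
    have hg0 : 0 ≤ Y1 ω - m := by linarith [h1.1]
    exact mul_le_mul_of_nonneg_right hfge hg0
  have hC_ge2 : -((M - μ0) * (M - μ1)) ≤ C := by
    rw [hCM]
    have hint4 : ∫ ω, (M - μ0) * (Y1 ω - M) ∂ℙ = -((M - μ0) * (M - μ1)) := by
      rw [integral_const_mul, integral_sub hi1 (integrable_const M)]
      simp only [integral_const, probReal_univ, smul_eq_mul, one_mul, ← hμ1]
      ring
    rw [← hint4]
    refine integral_mono_ae ((hi1.sub (integrable_const M)).const_mul _) hiM ?_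
    filter_upwards [hb0, hb1] with ω h0 h1
    have hfle : f ω ≤ M - μ0 := by simp only [hfdef]; linarith [h0.2]
    have hg0 : Y1 ω - M ≤ 0 := by linarith [h1.2]
    nlinarith
  have habs := abs_le.mp hCS
  constructor
  · rw [hVdiff, ← hV0, ← hV1]
    have h1 : C ≤ Real.sqrt (variance Y0 ℙ * variance Y1 ℙ) := habs.2
    rcases le_total (Real.sqrt (variance Y0 ℙ * variance Y1 ℙ))
      (min ((M - μ0) * (μ1 - m)) ((μ0 - m) * (M - μ1))) with h | h
    · rw [min_eq_left h]; linarith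
    · rw [min_eq_right h]
      rcases le_total ((M - μ0) * (μ1 - m)) ((μ0 - m) * (M - μ1)) with h' | h'
      · rw [min_eq_left h']; linarith
      · rw [min_eq_right h']; linarith
  · rw [hVdiff, ← hV0, ← hV1]
    have h1 : -Real.sqrt (variance Y0 ℙ * variance Y1 ℙ) ≤ C := habs.1
    rcases le_total (Real.sqrt (variance Y0 ℙ * variance Y1 ℙ))
      (min ((μ0 - m) * (μ1 - m)) ((M - μ0) * (M - μ1))) with h | h
    · rw [min_eq_left h]; linarith
    · rw [min_eq_right h]
      rcases le_total ((μ0 - m) * (μ1 - m)) ((M - μ0) * (M - μ1)) with h' | h'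
      · rw [min_eq_left h']; linarith
      · rw [min_eq_right h']; linarith
end

section
/- Let Y0, Y1 have finite second moments, Δ = Y1 - Y0, μ_O = E[max(Y0,Y1)], and μ_T = max{E(Y0), E(Y1)}. Then μ_O - μ_T ≤ (1/2)·sqrt(var(Δ) + (EΔ)²). -/
open MeasureTheory ProbabilityTheory

theorem rule_bound {Ω : Type*} [MeasureSpace Ω] [IsProbabilityMeasure (ℙ : Measure Ω)]
    (Y0 Y1 : Ω → ℝ) (h0 : MemLp Y0 2 ℙ) (h1 : MemLp Y1 2 ℙ) :
    (∫ ω, max (Y0 ω) (Y1 ω) ∂ℙ) - max (∫ ω, Y0 ω ∂ℙ) (∫ ω, Y1 ω ∂ℙ)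
      ≤ (1 / 2) * Real.sqrt (variance (Y1 - Y0) ℙ + (∫ ω, Y1 ω - Y0 ω ∂ℙ) ^ 2) := by
  have hΔ : MemLp (Y1 - Y0) 2 ℙ := h1.sub h0
  have habs : MemLp (|Y1 - Y0|) 2 ℙ := hΔ.abs
  have hi0 : Integrable Y0 ℙ := h0.integrable one_le_two
  have hi1 : Integrable Y1 ℙ := h1.integrable one_le_two
  have hiΔ : Integrable (Y1 - Y0) ℙ := hΔ.integrable one_le_two
  have hiabs : Integrable (fun ω => |Y1 ω - Y0 ω|) ℙ := hiΔ.abs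
  -- variance + mean² = second moment
  have hvar : variance (Y1 - Y0) ℙ + (∫ ω, Y1 ω - Y0 ω ∂ℙ) ^ 2
      = ∫ ω, (Y1 ω - Y0 ω) ^ 2 ∂ℙ := by
    rw [variance_eq_sub hΔ]
    simp [Pi.sub_apply]
  -- (E|Δ|)² ≤ E[Δ²] via variance of |Δ| nonneg
  have hCS : (∫ ω, |Y1 ω - Y0 ω| ∂ℙ) ^ 2 ≤ ∫ ω, (Y1 ω - Y0 ω) ^ 2 ∂ℙ := by
    have := variance_nonneg (|Y1 - Y0|) ℙ
    rw [variance_eq_sub habs] at this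
    simp only [Pi.pow_apply, Pi.abs_apply, Pi.sub_apply, sq_abs] at this
    linarith
  have hsqrt : ∫ ω, |Y1 ω - Y0 ω| ∂ℙ
      ≤ Real.sqrt (variance (Y1 - Y0) ℙ + (∫ ω, Y1 ω - Y0 ω ∂ℙ) ^ 2) := by
    rw [hvar]
    have hnn : 0 ≤ ∫ ω, |Y1 ω - Y0 ω| ∂ℙ :=
      integral_nonneg fun ω => abs_nonneg _
    exact (Real.le_sqrt hnn ((sq_nonneg _).trans hCS)).2 hCS
  -- E[max] = (E Y0 + E Y1 + E|Δ|)/2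
  have hmaxeq : (∫ ω, max (Y0 ω) (Y1 ω) ∂ℙ)
      = ((∫ ω, Y0 ω ∂ℙ) + (∫ ω, Y1 ω ∂ℙ) + ∫ ω, |Y1 ω - Y0 ω| ∂ℙ) / 2 := by
    have : ∀ ω, max (Y0 ω) (Y1 ω) = (Y0 ω + Y1 ω + |Y1 ω - Y0 ω|) / 2 := by
      intro ω
      rcases le_total (Y0 ω) (Y1 ω) with h | h
      · rw [max_eq_right h, abs_of_nonneg (by linarith)]; ring
      · rw [max_eq_left h, abs_of_nonpos (by linarith)]; ring
    rw [integral_congr_ae (Filter.Eventually.of_forall this)]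
    rw [integral_div]
    congr 1
    rw [← integral_add hi0 hi1]
    exact integral_add (hi0.add hi1) hiabs
  have hmaxge : ((∫ ω, Y0 ω ∂ℙ) + (∫ ω, Y1 ω ∂ℙ)) / 2 ≤ max (∫ ω, Y0 ω ∂ℙ) (∫ ω, Y1 ω ∂ℙ) := by
    rcases le_total (∫ ω, Y0 ω ∂ℙ) (∫ ω, Y1 ω ∂ℙ) with h | h
    · rw [max_eq_right h]; linarith
    · rw [max_eq_left h]; linarith
  rw [hmaxeq]
  linarith
end

section
/- Let Y0, Y1 have finite second moments with var(Y0) > 0, Δ = Y1 - Y0, ν = sqrt(var(Y1)/var(Y0)). Then E[max(Y0,Y1)] - max{E(Y0),E(Y1)} ≤ (1/2)·sqrt(var(Y0)(ν+1)² + (EΔ)²). -/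
open MeasureTheory ProbabilityTheory

section Aux

variable {Ω : Type*} [MeasureSpace Ω] [IsProbabilityMeasure (ℙ : Measure Ω)]

omit [IsProbabilityMeasure (ℙ : Measure Ω)] in
lemma aux_integrable_mul {f g : Ω → ℝ} (hf : MemLp f 2 ℙ) (hg : MemLp g 2 ℙ) :
    Integrable (fun ω => f ω * g ω) ℙ := by
  have h : Integrable (fun ω => (f ω ^ 2 + g ω ^ 2) / 2) ℙ :=
    (hf.integrable_sq.add hg.integrable_sq).div_const 2
  refine h.mono' (hf.aestronglyMeasurable.mul hg.aestronglyMeasurable) ?_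
  filter_upwards with ω
  rw [Real.norm_eq_abs, abs_mul]
  nlinarith [sq_nonneg (|f ω| - |g ω|), sq_abs (f ω), sq_abs (g ω),
    abs_nonneg (f ω), abs_nonneg (g ω)]

lemma aux_cs {f g : Ω → ℝ} (hf : MemLp f 2 ℙ) (hg : MemLp g 2 ℙ) :
    ∫ ω, |f ω| * |g ω| ∂ℙ ≤
      Real.sqrt (∫ ω, f ω ^ 2 ∂ℙ) * Real.sqrt (∫ ω, g ω ^ 2 ∂ℙ) := by
  have hpq : Real.HolderConjugate 2 2 := Real.HolderConjugate.two_two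
  have h2 : ENNReal.ofReal (2 : ℝ) = 2 := by
    rw [ENNReal.ofReal_ofNat]
  have hrpow : ∀ x : ℝ, x ^ (2 : ℝ) = x ^ (2 : ℕ) := fun x => by
    rw [show (2 : ℝ) = ((2 : ℕ) : ℝ) by norm_num, Real.rpow_natCast]
  have := integral_mul_le_Lp_mul_Lq_of_nonneg (μ := ℙ) hpq
    (f := fun ω => |f ω|) (g := fun ω => |g ω|)
    (Filter.Eventually.of_forall fun ω => abs_nonneg _)
    (Filter.Eventually.of_forall fun ω => abs_nonneg _)
    (by simpa [h2] using hf.norm) (by simpa [h2] using hg.norm)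
  calc ∫ ω, |f ω| * |g ω| ∂ℙ
      ≤ (∫ ω, |f ω| ^ (2:ℝ) ∂ℙ) ^ (1/2:ℝ) * (∫ ω, |g ω| ^ (2:ℝ) ∂ℙ) ^ (1/2:ℝ) := this
    _ = Real.sqrt (∫ ω, f ω ^ 2 ∂ℙ) * Real.sqrt (∫ ω, g ω ^ 2 ∂ℙ) := by
        simp only [hrpow, sq_abs]
        rw [Real.sqrt_eq_rpow, Real.sqrt_eq_rpow]

end Aux

theorem rule_bound_closed_form {Ω : Type*} [MeasureSpace Ω]
    [IsProbabilityMeasure (ℙ : Measure Ω)]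
    (Y0 Y1 : Ω → ℝ) (h0 : MemLp Y0 2 ℙ) (h1 : MemLp Y1 2 ℙ)
    (hv0 : 0 < variance Y0 ℙ) :
    (∫ ω, max (Y0 ω) (Y1 ω) ∂ℙ) - max (∫ ω, Y0 ω ∂ℙ) (∫ ω, Y1 ω ∂ℙ)
      ≤ (1 / 2) *
        Real.sqrt
          (variance Y0 ℙ * (Real.sqrt (variance Y1 ℙ / variance Y0 ℙ) + 1) ^ 2 +
            (∫ ω, Y1 ω - Y0 ω ∂ℙ) ^ 2) := by
  set v0 := variance Y0 ℙ with hv0def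
  set v1 := variance Y1 ℙ with hv1def
  set s0 := Real.sqrt v0 with hs0
  set s1 := Real.sqrt v1 with hs1
  have hs0pos : 0 < s0 := Real.sqrt_pos.2 hv0
  have hi0 : Integrable Y0 ℙ := h0.integrable one_le_two
  have hi1 : Integrable Y1 ℙ := h1.integrable one_le_two
  have hΔ : MemLp (fun ω => Y1 ω - Y0 ω) 2 ℙ := h1.sub h0
  have hiΔ : Integrable (fun ω => Y1 ω - Y0 ω) ℙ := hi1.sub hi0
  set m0 := ∫ ω, Y0 ω ∂ℙ
  set m1 := ∫ ω, Y1 ω ∂ℙ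
  set c := ∫ ω, Y1 ω - Y0 ω ∂ℙ with hc
  -- Step 1 : LHS ≤ (1/2) ∫ |Δ|
  have hmaxint : Integrable (fun ω => max (Y0 ω) (Y1 ω)) ℙ := hi0.sup hi1
  have step1 : (∫ ω, max (Y0 ω) (Y1 ω) ∂ℙ) - max m0 m1
      ≤ (1/2) * ∫ ω, |Y1 ω - Y0 ω| ∂ℙ := by
    have hptw : ∀ ω, max (Y0 ω) (Y1 ω) = (Y0 ω + Y1 ω) / 2 + |Y1 ω - Y0 ω| / 2 := by
      intro ω
      rcases le_total (Y0 ω) (Y1 ω) with h | h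
      · rw [max_eq_right h, abs_of_nonneg (by linarith)]; ring
      · rw [max_eq_left h, abs_of_nonpos (by linarith)]; ring
    have hint : (∫ ω, max (Y0 ω) (Y1 ω) ∂ℙ)
        = (m0 + m1) / 2 + (∫ ω, |Y1 ω - Y0 ω| ∂ℙ) / 2 := by
      have ia : Integrable (fun ω => (Y0 ω + Y1 ω) / 2) ℙ := (hi0.add hi1).div_const 2
      have ib : Integrable (fun ω => |Y1 ω - Y0 ω| / 2) ℙ := hiΔ.abs.div_const 2
      have ic : Integrable (fun ω => Y0 ω + Y1 ω) ℙ := hi0.add hi1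
      calc (∫ ω, max (Y0 ω) (Y1 ω) ∂ℙ)
          = ∫ ω, ((Y0 ω + Y1 ω) / 2 + |Y1 ω - Y0 ω| / 2) ∂ℙ :=
            integral_congr_ae (Filter.Eventually.of_forall hptw)
        _ = (m0 + m1) / 2 + (∫ ω, |Y1 ω - Y0 ω| ∂ℙ) / 2 := by
            rw [integral_add ia ib, integral_div, integral_div, integral_add hi0 hi1]
    have hmaxm : (m0 + m1) / 2 ≤ max m0 m1 := by
      have := le_max_left m0 m1
      have := le_max_right m0 m1
      linarith
    rw [hint]; linarith
  -- Step 2 : ∫ |Δ| ≤ sqrt (∫ Δ²)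
  have step2 : (∫ ω, |Y1 ω - Y0 ω| ∂ℙ) ≤ Real.sqrt (∫ ω, (Y1 ω - Y0 ω) ^ 2 ∂ℙ) := by
    have hone : MemLp (fun _ : Ω => (1:ℝ)) 2 ℙ := memLp_const 1
    have := aux_cs hΔ hone
    simpa [Real.sqrt_one] using this
  -- Step 3 : ∫ Δ² = variance Δ + c²
  have step3 : (∫ ω, (Y1 ω - Y0 ω) ^ 2 ∂ℙ)
      = variance (fun ω => Y1 ω - Y0 ω) ℙ + c ^ 2 := by
    have := variance_eq_sub (μ := ℙ) hΔ
    simp only [Pi.pow_apply] at this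
    rw [this]; ring
  -- Step 4 : variance Δ ≤ (s1 + s0)^2
  have hf : MemLp (fun ω => Y1 ω - m1) 2 ℙ := h1.sub (memLp_const m1)
  have hg : MemLp (fun ω => Y0 ω - m0) 2 ℙ := h0.sub (memLp_const m0)
  have hvf : (∫ ω, (Y1 ω - m1) ^ 2 ∂ℙ) = v1 := by
    rw [hv1def, variance_eq_integral h1.aestronglyMeasurable.aemeasurable]
  have hvg : (∫ ω, (Y0 ω - m0) ^ 2 ∂ℙ) = v0 := by
    rw [hv0def, variance_eq_integral h0.aestronglyMeasurable.aemeasurable]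
  have step4 : variance (fun ω => Y1 ω - Y0 ω) ℙ ≤ (s1 + s0) ^ 2 := by
    have hceq : c = m1 - m0 := by rw [hc, integral_sub hi1 hi0]
    have hveq : variance (fun ω => Y1 ω - Y0 ω) ℙ
        = ∫ ω, ((Y1 ω - m1) - (Y0 ω - m0)) ^ 2 ∂ℙ := by
      rw [variance_eq_integral hΔ.aestronglyMeasurable.aemeasurable]
      apply integral_congr_ae
      filter_upwards with ω
      rw [← hc, hceq]; ring
    have hexp : (∫ ω, ((Y1 ω - m1) - (Y0 ω - m0)) ^ 2 ∂ℙ)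
        = v1 + v0 - 2 * ∫ ω, (Y1 ω - m1) * (Y0 ω - m0) ∂ℙ := by
      rw [← hvf, ← hvg]
      have : ∀ ω, ((Y1 ω - m1) - (Y0 ω - m0)) ^ 2
          = ((Y1 ω - m1) ^ 2 + (Y0 ω - m0) ^ 2) - 2 * ((Y1 ω - m1) * (Y0 ω - m0)) := by
        intro ω; ring
      have iA : Integrable (fun ω => (Y1 ω - m1) ^ 2 + (Y0 ω - m0) ^ 2) ℙ :=
        hf.integrable_sq.add hg.integrable_sq
      have iB : Integrable (fun ω => 2 * ((Y1 ω - m1) * (Y0 ω - m0))) ℙ :=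
        (aux_integrable_mul hf hg).const_mul 2
      have iA1 : Integrable (fun ω => (Y1 ω - m1) ^ 2) ℙ := hf.integrable_sq
      have iA2 : Integrable (fun ω => (Y0 ω - m0) ^ 2) ℙ := hg.integrable_sq
      rw [integral_congr_ae (Filter.Eventually.of_forall this),
        integral_sub iA iB, integral_add iA1 iA2, integral_const_mul]
    have hcs : -(∫ ω, (Y1 ω - m1) * (Y0 ω - m0) ∂ℙ) ≤ s1 * s0 := by
      have h1' : |∫ ω, (Y1 ω - m1) * (Y0 ω - m0) ∂ℙ|
          ≤ ∫ ω, |Y1 ω - m1| * |Y0 ω - m0| ∂ℙ := by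
        simpa [Real.norm_eq_abs, abs_mul] using
          norm_integral_le_integral_norm (μ := ℙ) (fun ω => (Y1 ω - m1) * (Y0 ω - m0))
      have h2' := aux_cs hf hg
      rw [hvf, hvg] at h2'
      calc -(∫ ω, (Y1 ω - m1) * (Y0 ω - m0) ∂ℙ)
          ≤ |∫ ω, (Y1 ω - m1) * (Y0 ω - m0) ∂ℙ| := neg_le_abs _
        _ ≤ s1 * s0 := h1'.trans h2'
    have hs0sq : s0 ^ 2 = v0 := Real.sq_sqrt hv0.le
    have hs1sq : s1 ^ 2 = v1 := Real.sq_sqrt (variance_nonneg _ _)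
    rw [hveq, hexp]; nlinarith
  -- Step 5 : (s1 + s0)^2 = v0 * (sqrt (v1/v0) + 1)^2
  have step5 : v0 * (Real.sqrt (v1 / v0) + 1) ^ 2 = (s1 + s0) ^ 2 := by
    have hdiv : Real.sqrt (v1 / v0) = s1 / s0 := Real.sqrt_div (variance_nonneg _ _) v0
    have hs0sq : s0 ^ 2 = v0 := Real.sq_sqrt hv0.le
    rw [hdiv, ← hs0sq]
    field_simp
  rw [step5]
  calc (∫ ω, max (Y0 ω) (Y1 ω) ∂ℙ) - max m0 m1
      ≤ (1/2) * ∫ ω, |Y1 ω - Y0 ω| ∂ℙ := step1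
    _ ≤ (1/2) * Real.sqrt (∫ ω, (Y1 ω - Y0 ω) ^ 2 ∂ℙ) := by linarith [step2]
    _ = (1/2) * Real.sqrt (variance (fun ω => Y1 ω - Y0 ω) ℙ + c ^ 2) := by rw [step3]
    _ ≤ (1/2) * Real.sqrt ((s1 + s0) ^ 2 + c ^ 2) := by
        have h4 : variance (fun ω => Y1 ω - Y0 ω) ℙ + c ^ 2 ≤ (s1 + s0) ^ 2 + c ^ 2 := by
          linarith [step4]
        have := Real.sqrt_le_sqrt h4
        linarith
end
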